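/- arXiv:1804.01256 — 4 statements merged into one kernel-verified Lean document; each statement's English description precedes it below -/
import Mathlib

section
/- The relation ⊴ on negative sequential patterns (defined by pairwise inclusion of positive and negative itemsets, with the non-reflexivity condition on the last positive itemset when lengths differ) is transitive. -/
/-- A negative sequential pattern ⟨p_1 ¬q_1 … ¬q_{k-1} p_k⟩: `k ≥ 1` positive itemsets
(nonempty) interleaved with (possibly empty) negative itemsets. -/
structure NSP (α : Type*) where
  k : ℕ
  pos : ℕ → Finset α
  neg : ℕ → Finset α
  k_pos : 1 ≤ k
  pos_nonempty : ∀ i, i < k → (pos i).Nonempty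

/-- The partial order ⊴ on negative sequential patterns: pairwise inclusion of the
positive and negative itemsets, with the non-reflexivity condition on the last positive
itemset when the lengths differ. -/
def NSP.le {α : Type*} (p p' : NSP α) : Prop :=
  p.k ≤ p'.k ∧
  (∀ i, i + 1 < p.k → p.pos i ⊆ p'.pos i ∧ p.neg i ⊆ p'.neg i) ∧
  p.pos (p.k - 1) ⊆ p'.pos (p.k - 1) ∧
  (p'.k ≠ p.k → p.pos (p.k - 1) ≠ p'.pos (p.k - 1))

/-- The relation ⊴ on negative sequential patterns is transitive. -/
theorem NSP.le_trans {α : Type*} (p p' p'' : NSP α)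
    (h1 : NSP.le p p') (h2 : NSP.le p' p'') : NSP.le p p'' := by
  obtain ⟨hk1, hmid1, hlast1, hne1⟩ := h1
  obtain ⟨hk2, hmid2, hlast2, hne2⟩ := h2
  have hsucc : p.k - 1 + 1 = p.k := Nat.succ_pred_eq_of_pos p.k_pos
  refine ⟨Nat.le_trans hk1 hk2, ?_, ?_, ?_⟩
  · intro i hi
    have hi' : i + 1 < p'.k := lt_of_lt_of_le hi hk1
    exact ⟨(hmid1 i hi).1.trans (hmid2 i hi').1, (hmid1 i hi).2.trans (hmid2 i hi').2⟩
  · rcases eq_or_lt_of_le hk1 with heq | hlt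
    · exact hlast1.trans (heq ▸ hlast2)
    · exact hlast1.trans (hmid2 (p.k - 1) (by omega)).1
  · intro hne
    rcases eq_or_lt_of_le hk1 with heq | hlt
    · have h' : p'.pos (p'.k - 1) ≠ p''.pos (p'.k - 1) := hne2 (by omega)
      rw [← heq] at h'
      have hsub : p'.pos (p.k - 1) ⊂ p''.pos (p.k - 1) := by
        refine lt_of_le_of_ne ?_ h'
        rw [heq]; exact heq ▸ hlast2
      exact ne_of_lt (lt_of_le_of_lt hlast1 hsub)
    · have h' := hne1 (by omega)
      have hsub : p.pos (p.k - 1) ⊂ p'.pos (p.k - 1) := lt_of_le_of_ne hlast1 h'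
      have hsub2 : p'.pos (p.k - 1) ⊆ p''.pos (p.k - 1) := (hmid2 (p.k - 1) (by omega)).1
      exact ne_of_lt (lt_of_lt_of_le hsub hsub2)
end

section
/- Anti-monotonicity of NSP support under soft occurrence and total non-inclusion: if p ⊴ p' are negative sequential patterns and a sequence s soft-supports p' (there exists an embedding of p' in s satisfying all negative constraints under total non-inclusion), then s soft-supports p. Consequently supp(p) ≥ supp(p') on any dataset. -/
attribute [local instance] Classical.propDecidable

variable {α : Type*} [DecidableEq α]

/-- The pattern `p` softly-occurs in the sequence `s` (of length `n`): there exists a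
strictly increasing embedding of the positive itemsets such that every negative itemset
is disjoint (total non-inclusion) from all itemsets strictly between the surrounding
positive positions. -/
def SoftOccurs (n : ℕ) (s : ℕ → Finset α) (p : NSP α) : Prop :=
  ∃ e : ℕ → ℕ,
    (∀ i j, i < j → j < p.k → e i < e j) ∧
    (∀ i, i < p.k → e i < n) ∧
    (∀ i, i < p.k → p.pos i ⊆ s (e i)) ∧
    (∀ i, i + 1 < p.k → ∀ j, e i < j → j < e (i + 1) → p.neg i ∩ s j = ∅)

/-- p ⊴ p' : k ≤ k' with pairwise inclusions of positive and negative itemsets over the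
first k positions. -/
def NSPle (p p' : NSP α) : Prop :=
  p.k ≤ p'.k ∧
  (∀ i, i + 1 < p.k → p.pos i ⊆ p'.pos i ∧ p.neg i ⊆ p'.neg i) ∧
  p.pos (p.k - 1) ⊆ p'.pos (p.k - 1)

/-- The soft-occurrence support of `p` on a dataset `D` of sequences. -/
noncomputable def supp (p : NSP α) (D : List (ℕ × (ℕ → Finset α))) : ℕ :=
  D.countP (fun sq => decide (SoftOccurs sq.1 sq.2 p))

/-- Anti-monotonicity of NSP support under soft occurrence and total non-inclusion:
if p ⊴ p' then every sequence soft-supporting p' soft-supports p, and hence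
supp(p) ≥ supp(p') on any dataset. -/
theorem nsp_support_antimonotonic (p p' : NSP α) (h : NSPle p p') :
    (∀ (n : ℕ) (s : ℕ → Finset α), SoftOccurs n s p' → SoftOccurs n s p) ∧
    (∀ D : List (ℕ × (ℕ → Finset α)), supp p' D ≤ supp p D) := by
  obtain ⟨hk, hmid, hlast⟩ := h
  have main : ∀ (n : ℕ) (s : ℕ → Finset α), SoftOccurs n s p' → SoftOccurs n s p := by
    intro n s ⟨e, hmono, hbd, hpos, hneg⟩
    refine ⟨e, fun i j hij hj => hmono i j hij (lt_of_lt_of_le hj hk),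
      fun i hi => hbd i (lt_of_lt_of_le hi hk), ?_, ?_⟩
    · intro i hi
      have hi' : i < p'.k := lt_of_lt_of_le hi hk
      rcases lt_or_eq_of_le (Nat.succ_le_of_lt hi) with hcase | hcase
      · exact (hmid i hcase).1.trans (hpos i hi')
      · have : i = p.k - 1 := by omega
        subst this
        exact hlast.trans (hpos _ hi')
    · intro i hi j hj1 hj2
      have := hneg i (lt_of_lt_of_le hi hk) j hj1 hj2
      have hsub : p.neg i ∩ s j ⊆ p'.neg i ∩ s j :=
        Finset.inter_subset_inter (hmid i hi).2 (le_refl _)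
      rw [this] at hsub
      exact Finset.subset_empty.mp hsub
  refine ⟨main, fun D => ?_⟩
  unfold supp
  apply List.countP_mono_left
  intro a _ ha
  simp only [decide_eq_true_eq] at *
  exact main a.1 a.2 ha
end

section
/- Anti-monotonicity under maxgap and maxspan constraints: if p ⊴ p' and a sequence s has an embedding of p' satisfying the maxgap constraint θ (consecutive positive positions differ by at most θ) and the maxspan constraint τ (last minus first position at most τ) and all total non-inclusion negative constraints, then s has an embedding of p satisfying the same maxgap and maxspan constraints and all negative constraints of p. -/
variable {α : Type*} [DecidableEq α]

/-- `e` is an embedding of `p` in the sequence `s` (length `n`) satisfying the total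
non-inclusion negative constraints, the maxgap constraint `θ` and the maxspan
constraint `τ`. -/
def ConstrainedEmbedding (n : ℕ) (s : ℕ → Finset α) (p : NSP α) (θ τ : ℕ)
    (e : ℕ → ℕ) : Prop :=
  (∀ i j, i < j → j < p.k → e i < e j) ∧
  (∀ i, i < p.k → e i < n) ∧
  (∀ i, i < p.k → p.pos i ⊆ s (e i)) ∧
  (∀ i, i + 1 < p.k → ∀ j, e i < j → j < e (i + 1) → p.neg i ∩ s j = ∅) ∧
  (∀ i, i + 1 < p.k → e (i + 1) - e i ≤ θ) ∧
  e (p.k - 1) - e 0 ≤ τ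

/-- Anti-monotonicity under maxgap and maxspan constraints: if p ⊴ p' and `s` has an
embedding of p' satisfying maxgap θ, maxspan τ and the total non-inclusion negative
constraints, then `s` has such an embedding of p. -/
theorem nsp_antimonotonic_with_gap_constraints (p p' : NSP α) (h : NSPle p p')
    (n : ℕ) (s : ℕ → Finset α) (θ τ : ℕ)
    (hocc : ∃ e, ConstrainedEmbedding n s p' θ τ e) :
    ∃ e, ConstrainedEmbedding n s p θ τ e := by
  obtain ⟨e, hmono, hlt, hpos, hneg, hgap, hspan⟩ := hocc
  obtain ⟨hk, hincl, hlast⟩ := h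
  have hk1 : p.k - 1 < p.k := Nat.sub_lt p.k_pos one_pos
  have hk1' : p.k - 1 < p'.k := lt_of_lt_of_le hk1 hk
  refine ⟨e, ?_, ?_, ?_, ?_, ?_, ?_⟩
  · exact fun i j hij hj => hmono i j hij (lt_of_lt_of_le hj hk)
  · exact fun i hi => hlt i (lt_of_lt_of_le hi hk)
  · intro i hi
    rcases lt_or_eq_of_le (Nat.succ_le_of_lt hi) with h1 | h1
    · exact (hincl i h1).1.trans (hpos i (lt_of_lt_of_le hi hk))
    · have : i = p.k - 1 := by omega
      subst this
      exact hlast.trans (hpos _ hk1')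
  · intro i hi j h1 h2
    have := hneg i (lt_of_lt_of_le hi hk) j h1 h2
    have hsub := (hincl i hi).2
    apply Finset.subset_empty.mp
    rw [← this]
    exact Finset.inter_subset_inter_right hsub
  · exact fun i hi => hgap i (lt_of_lt_of_le hi hk)
  · have hle : e (p.k - 1) ≤ e (p'.k - 1) := by
      rcases lt_or_eq_of_le (Nat.sub_le_sub_right hk 1) with h1 | h1
      · exact le_of_lt (hmono _ _ h1 (Nat.sub_lt p'.k_pos one_pos))
      · rw [h1]
    exact le_trans (Nat.sub_le_sub_right hle (e 0)) hspan
end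

section
/- The patterns ⟨a ¬b b c⟩ and ⟨a b ¬b c⟩ are semantically equivalent under soft occurrence with total non-inclusion: a sequence of itemsets softly-supports ⟨a ¬b b c⟩ if and only if it softly-supports ⟨a b ¬b c⟩. -/
/-- The patterns ⟨a ¬b b c⟩ and ⟨a b ¬b c⟩ are semantically equivalent under soft
occurrence with total non-inclusion: a sequence `s` (of length `n`) softly-supports
⟨a ¬b b c⟩ iff it softly-supports ⟨a b ¬b c⟩. -/
theorem neg_before_eq_neg_after {α : Type*} [DecidableEq α] (a b c : α)
    (n : ℕ) (s : ℕ → Finset α) :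
    (∃ i j k, i < j ∧ j < k ∧ k < n ∧ a ∈ s i ∧ b ∈ s j ∧ c ∈ s k ∧
      ∀ l, i < l → l < j → b ∉ s l) ↔
    (∃ i j k, i < j ∧ j < k ∧ k < n ∧ a ∈ s i ∧ b ∈ s j ∧ c ∈ s k ∧
      ∀ l, j < l → l < k → b ∉ s l) := by
  constructor
  · rintro ⟨i, j, k, hij, hjk, hkn, ha, hb, hc, -⟩
    -- take the last occurrence of b in (i, k)
    set P : ℕ → Prop := fun l => i < l ∧ b ∈ s l with hP
    have hjle : j ≤ k - 1 := Nat.le_sub_one_of_lt hjk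
    have hPj : P j := ⟨hij, hb⟩
    have hspec : P (Nat.findGreatest P (k - 1)) := Nat.findGreatest_spec hjle hPj
    refine ⟨i, Nat.findGreatest P (k - 1), k, hspec.1, ?_, hkn, ha, hspec.2, hc, ?_⟩
    · exact lt_of_le_of_lt (Nat.findGreatest_le _) (Nat.sub_lt (Nat.pos_of_ne_zero (by omega)) one_pos)
    · intro l hl hlk hbl
      have hlle : l ≤ k - 1 := Nat.le_sub_one_of_lt hlk
      exact Nat.findGreatest_is_greatest hl hlle ⟨lt_trans hspec.1 hl, hbl⟩
  · rintro ⟨i, j, k, hij, hjk, hkn, ha, hb, hc, -⟩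
    -- take the first occurrence of b after i
    have hex : ∃ l, i < l ∧ b ∈ s l := ⟨j, hij, hb⟩
    set m := Nat.find hex with hm
    have hspec : i < m ∧ b ∈ s m := Nat.find_spec hex
    have hmj : m ≤ j := Nat.find_le ⟨hij, hb⟩
    refine ⟨i, m, k, hspec.1, lt_of_le_of_lt hmj hjk, hkn, ha, hspec.2, hc, ?_⟩
    intro l hl hlm hbl
    exact Nat.find_min hex hlm ⟨hl, hbl⟩
end
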